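/- Let u be C² on Ω ⊂ R² with Du(x) ≠ 0 at x, and 1 < p < ∞. Then Δ_p u(x) = 0 if and only if u(x) = (1/p)·med_{∂B_ε(x)} u + ((p-1)/(2p))·(max_{cl B_ε(x)} u + min_{cl B_ε(x)} u) + o(ε²) as ε → 0. -/

import Mathlib

open MeasureTheory Real Filter Asymptotics Metric Set Topology

/-- Partial derivative ∂u/∂x_i. -/
noncomputable def pd {N : ℕ} (u : EuclideanSpace ℝ (Fin N) → ℝ) (i : Fin N)
    (x : EuclideanSpace ℝ (Fin N)) : ℝ :=
  fderiv ℝ u x (EuclideanSpace.single i 1)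

/-- Second partial derivative ∂²u/∂x_i∂x_j. -/
noncomputable def pd2 {N : ℕ} (u : EuclideanSpace ℝ (Fin N) → ℝ) (i j : Fin N)
    (x : EuclideanSpace ℝ (Fin N)) : ℝ :=
  pd (pd u j) i x

/-- The norm of the gradient |Du(x)|. -/
noncomputable def gradNorm {N : ℕ} (u : EuclideanSpace ℝ (Fin N) → ℝ)
    (x : EuclideanSpace ℝ (Fin N)) : ℝ :=
  Real.sqrt (∑ i, (pd u i x) ^ 2)

/-- The Laplacian Δu. -/
noncomputable def lap {N : ℕ} (u : EuclideanSpace ℝ (Fin N) → ℝ)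
    (x : EuclideanSpace ℝ (Fin N)) : ℝ :=
  ∑ i, pd2 u i i x

/-- The infinity-Laplacian Δ_∞ u = |Du|⁻² Σ ∂_i u ∂_j u ∂_ij u. -/
noncomputable def infLap {N : ℕ} (u : EuclideanSpace ℝ (Fin N) → ℝ)
    (x : EuclideanSpace ℝ (Fin N)) : ℝ :=
  (∑ i, ∑ j, pd u i x * pd u j x * pd2 u i j x) / (gradNorm u x) ^ 2

/-- The p-Laplacian Δ_p u = div(|Du|^{p-2} Du). -/
noncomputable def pLap {N : ℕ} (p : ℝ) (u : EuclideanSpace ℝ (Fin N) → ℝ)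
    (x : EuclideanSpace ℝ (Fin N)) : ℝ :=
  ∑ i, pd (fun y => gradNorm u y ^ (p - 2) * pd u i y) i x

/-- The 1-Laplacian Δ_1 u = |Du| div(Du/|Du|). -/
noncomputable def oneLap {N : ℕ} (u : EuclideanSpace ℝ (Fin N) → ℝ)
    (x : EuclideanSpace ℝ (Fin N)) : ℝ :=
  gradNorm u x * ∑ i, pd (fun y => pd u i y / gradNorm u y) i x

/-- The point x + ε(cos θ, sin θ) on the circle ∂B_ε(x). -/
noncomputable def circlePt (x : EuclideanSpace ℝ (Fin 2)) (ε θ : ℝ) :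
    EuclideanSpace ℝ (Fin 2) :=
  x + ε • (EuclideanSpace.single 0 (Real.cos θ) + EuclideanSpace.single 1 (Real.sin θ))

/-- The average of u over the circle ∂B_ε(x). -/
noncomputable def circleAvg (u : EuclideanSpace ℝ (Fin 2) → ℝ)
    (x : EuclideanSpace ℝ (Fin 2)) (ε : ℝ) : ℝ :=
  (2 * Real.pi)⁻¹ * ∫ θ in (0:ℝ)..(2 * Real.pi), u (circlePt x ε θ)

/-- m is a median of u over the circle ∂B_ε(x): the arc-length measures of the
sets where u ≥ m and u ≤ m coincide. -/
def IsCircleMedian (u : EuclideanSpace ℝ (Fin 2) → ℝ)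
    (x : EuclideanSpace ℝ (Fin 2)) (ε m : ℝ) : Prop :=
  volume {θ ∈ Set.Ico (0:ℝ) (2 * Real.pi) | m ≤ u (circlePt x ε θ)} =
  volume {θ ∈ Set.Ico (0:ℝ) (2 * Real.pi) | u (circlePt x ε θ) ≤ m}

/-!
Let `ν = (cos α, sin α)` be the direction of `Du(x)`, `ν⊥` its rotation by `π / 2`, and
`A = D²u(x)(ν, ν)`, `B = D²u(x)(ν⊥, ν⊥)`, `K = D²u(x)(ν, ν⊥) + D²u(x)(ν⊥, ν)`. By Taylor's theorem
`u(x + aν + bν⊥) = u(x) + |Du(x)| a + (A a² + K a b + B b²) / 2 + o(a² + b²)`.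

On `cl B_ε(x)` we have `b² ≤ 2ε (ε - a)`, so the loss `|Du| (ε - a)` in the linear term
dominates the quadratic terms up to `o(ε²)`; hence `max u = u(x) + |Du| ε + A ε² / 2 + o(ε²)`,
and `min u` is the same with `-ε` in place of `ε`.

On `∂B_ε(x)`, the set where `u ≥ u(x) + s ε²` with `s > B / 2` lies in an arc
`cos (θ - α) ≥ c ε` with `c > 0`, shorter than a half circle, so the median is below
`u(x) + s ε²`; the same argument for `-u` gives `med u = u(x) + B ε² / 2 + o(ε²)`. Hence the
expression in the statement is `-(B + (p - 1) A) ε² / (2 p) + o(ε²)`, while `Δ_p u(x) = |Du|^(p-2) (Δu + (p - 2) Δ_∞ u)` and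
`Δu = A + B`, `Δ_∞ u = A`.
-/

section Taylor

variable {E : Type*} [NormedAddCommGroup E] [NormedSpace ℝ E]

lemma bilin_smul_add_smul_diag (T : E →L[ℝ] E →L[ℝ] ℝ) (v w : E) (a b : ℝ) :
    T (a • v + b • w) (a • v + b • w) =
      a ^ 2 * T v v + a * b * (T v w + T w v) + b ^ 2 * T w w := by
  simp only [map_add, map_smul, add_apply, smul_apply, smul_eq_mul]
  ring

theorem ContDiffAt.isLittleO_taylor_two {u : E → ℝ} {x : E} (hu : ContDiffAt ℝ 2 u x) :
    (fun h => u (x + h) - u x - fderiv ℝ u x h - fderiv ℝ (fderiv ℝ u) x h h / 2)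
      =o[𝓝 0] fun h => ‖h‖ ^ 2 := by
  set H := fderiv ℝ (fderiv ℝ u) x
  have hH : HasFDerivAt (fderiv ℝ u) H x :=
    ((hu.fderiv_right (m := 1) le_rfl).differentiableAt one_ne_zero).hasFDerivAt
  have hdiff : ∀ᶠ h in 𝓝 (0 : E), DifferentiableAt ℝ u (x + h) :=
    ((continuous_const_add x).tendsto' 0 x (add_zero x)).eventually
      ((hu.eventually (by simp)).mono fun y hy => hy.differentiableAt two_ne_zero)
  refine isLittleO_iff.2 fun δ hδ => ?_
  obtain ⟨r, hr, hball⟩ := Metric.eventually_nhds_iff_ball.1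
    (hdiff.and (isLittleO_iff.1 (hasFDerivAt_iff_isLittleO_nhds_zero.1 hH) hδ))
  filter_upwards [Metric.ball_mem_nhds 0 hr] with h hh
  have hseg : ∀ t ∈ Icc (0 : ℝ) 1, t • h ∈ Metric.ball (0 : E) r := fun t ht => by
    rw [mem_ball_zero_iff] at hh ⊢
    rw [norm_smul, Real.norm_of_nonneg ht.1]
    nlinarith [norm_nonneg h, ht.2]
  set φ : ℝ → ℝ := fun t => u (x + t • h) - t * fderiv ℝ u x h - t ^ 2 * (H h h / 2)
  have hφ : ∀ t ∈ Icc (0 : ℝ) 1, HasDerivWithinAt φ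
      ((fderiv ℝ u (x + t • h) - fderiv ℝ u x - H (t • h)) h) (Icc 0 1) t := by
    intro t ht
    have hline : HasDerivAt (fun s : ℝ => x + s • h) h t := by
      simpa using ((hasDerivAt_id t).smul_const h).const_add x
    have := (((hball _ (hseg t ht)).1.hasFDerivAt.comp_hasDerivAt t hline).sub
      ((hasDerivAt_id t).mul_const (fderiv ℝ u x h))).sub
      ((hasDerivAt_pow 2 t).mul_const (H h h / 2))
    refine (this.congr_deriv ?_).hasDerivWithinAt
    simp only [sub_apply, map_smul, smul_apply, smul_eq_mul]
    ring
  have hbound : ∀ t ∈ Ico (0 : ℝ) 1,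
      ‖(fderiv ℝ u (x + t • h) - fderiv ℝ u x - H (t • h)) h‖ ≤ δ * ‖h‖ ^ 2 := by
    intro t ht
    have hle := (hball _ (hseg t (Ico_subset_Icc_self ht))).2
    rw [norm_smul, Real.norm_of_nonneg ht.1] at hle
    calc _ ≤ ‖fderiv ℝ u (x + t • h) - fderiv ℝ u x - H (t • h)‖ * ‖h‖ :=
          ContinuousLinearMap.le_opNorm _ _
      _ ≤ δ * (t * ‖h‖) * ‖h‖ := by gcongr
      _ = t * (δ * ‖h‖ ^ 2) := by ring
      _ ≤ δ * ‖h‖ ^ 2 := mul_le_of_le_one_left (by positivity) ht.2.le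
  have := norm_image_sub_le_of_norm_deriv_le_segment_01' hφ hbound
  simp only [φ, one_smul, zero_smul, add_zero, one_pow, one_mul, zero_mul, sub_zero,
    zero_pow two_ne_zero] at this
  rwa [norm_pow, norm_norm, show u (x + h) - u x - fderiv ℝ u x h - H h h / 2 =
    u (x + h) - fderiv ℝ u x h - H h h / 2 - u x by ring]

lemma fderiv_fderiv_fun_neg (u : E → ℝ) (x : E) :
    fderiv ℝ (fderiv ℝ fun y => -u y) x = -fderiv ℝ (fderiv ℝ u) x := by
  rw [show fderiv ℝ (fun y => -u y) = fun y => -fderiv ℝ u y from funext fun _ => fderiv_fun_neg,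
    fderiv_fun_neg]

end Taylor

lemma gradient_fun_neg {E : Type*} [NormedAddCommGroup E] [InnerProductSpace ℝ E]
    [CompleteSpace E] (u : E → ℝ) (x : E) : gradient (fun y => -u y) x = -gradient u x := by
  simp [gradient, fderiv_fun_neg]

section PartialDerivatives

variable {N : ℕ} {f g u : EuclideanSpace ℝ (Fin N) → ℝ} {x : EuclideanSpace ℝ (Fin N)}

lemma pd_eq_gradient_apply (u : EuclideanSpace ℝ (Fin N) → ℝ) (i : Fin N)
    (x : EuclideanSpace ℝ (Fin N)) : pd u i x = gradient u x i := by
  simp [pd, ← inner_gradient_left, EuclideanSpace.inner_single_right]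

lemma gradNorm_eq_norm_gradient (u : EuclideanSpace ℝ (Fin N) → ℝ)
    (x : EuclideanSpace ℝ (Fin N)) : gradNorm u x = ‖gradient u x‖ := by
  simp [gradNorm, EuclideanSpace.norm_eq, pd_eq_gradient_apply]

lemma pd_mul (hf : DifferentiableAt ℝ f x) (hg : DifferentiableAt ℝ g x) (i : Fin N) :
    pd (fun y => f y * g y) i x = f x * pd g i x + g x * pd f i x := by
  simp [pd, (hf.hasFDerivAt.fun_mul hg.hasFDerivAt).fderiv]

lemma pd_rpow_const (hf : DifferentiableAt ℝ f x) (hx : f x ≠ 0) (q : ℝ) (i : Fin N) :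
    pd (fun y => f y ^ q) i x = q * f x ^ (q - 1) * pd f i x := by
  simp [pd, (hf.hasFDerivAt.rpow_const (Or.inl hx)).fderiv, mul_assoc]

lemma ContDiffAt.differentiableAt_pd (hu : ContDiffAt ℝ 2 u x) (j : Fin N) :
    DifferentiableAt ℝ (pd u j) x :=
  ((hu.fderiv_right (m := 1) le_rfl).differentiableAt one_ne_zero).clm_apply
    (differentiableAt_const _)

lemma ContDiffAt.pd2_eq_fderiv_fderiv (hu : ContDiffAt ℝ 2 u x) (i j : Fin N) :
    pd2 u i j x = fderiv ℝ (fderiv ℝ u) x (EuclideanSpace.single i 1)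
      (EuclideanSpace.single j 1) := by
  have hF := (hu.fderiv_right (m := 1) le_rfl).differentiableAt one_ne_zero
  have := hF.hasFDerivAt.clm_apply (hasFDerivAt_const (EuclideanSpace.single j (1 : ℝ)) x)
  rw [pd2, pd, show pd u j = fun y => fderiv ℝ u y (EuclideanSpace.single j 1) from rfl,
    this.fderiv]
  simp

lemma ContDiffAt.hasFDerivAt_gradNorm (hu : ContDiffAt ℝ 2 u x) (hG : gradNorm u x ≠ 0) :
    HasFDerivAt (gradNorm u)
      ((gradNorm u x)⁻¹ • ∑ j, pd u j x • fderiv ℝ (pd u j) x) x := by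
  have hsum := HasFDerivAt.fun_sum (u := Finset.univ) fun j _ =>
    ((hu.differentiableAt_pd j).hasFDerivAt.pow 2)
  refine (hsum.sqrt fun h => hG (by simp [gradNorm, h])).congr_fderiv ?_
  simp only [Finset.smul_sum, smul_smul]
  refine Finset.sum_congr rfl fun j _ => ?_
  simp only [gradNorm, nsmul_eq_mul, Nat.cast_ofNat, Nat.add_one_sub_one, pow_one]
  field_simp

lemma ContDiffAt.pd_gradNorm (hu : ContDiffAt ℝ 2 u x) (hG : gradNorm u x ≠ 0) (i : Fin N) :
    pd (gradNorm u) i x = (∑ j, pd u j x * pd2 u i j x) / gradNorm u x := by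
  rw [pd, (hu.hasFDerivAt_gradNorm hG).fderiv]
  simp [pd2, pd, div_eq_inv_mul]

theorem ContDiffAt.pLap_eq (hu : ContDiffAt ℝ 2 u x) (hG : gradNorm u x ≠ 0) (p : ℝ) :
    pLap p u x = gradNorm u x ^ (p - 2) * (lap u x + (p - 2) * infLap u x) := by
  have hGd := (hu.hasFDerivAt_gradNorm hG).differentiableAt
  have hterm : ∀ i, pd (fun y => gradNorm u y ^ (p - 2) * pd u i y) i x =
      gradNorm u x ^ (p - 2) * (pd2 u i i x +
        (p - 2) * (∑ j, pd u i x * pd u j x * pd2 u i j x) / gradNorm u x ^ 2) := by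
    intro i
    rw [pd_mul (hGd.rpow_const (Or.inl hG)) (hu.differentiableAt_pd i),
      pd_rpow_const hGd hG, hu.pd_gradNorm hG, Real.rpow_sub_one hG]
    simp only [pd2, mul_assoc, ← Finset.mul_sum]
    field_simp
  simp only [pLap, lap, infLap, hterm, ← Finset.mul_sum, Finset.sum_add_distrib,
    ← Finset.sum_div]
  ring

end PartialDerivatives

open scoped RealInnerProductSpace

local notation "ℝ²" => EuclideanSpace ℝ (Fin 2)

noncomputable def circleDir (θ : ℝ) : ℝ² :=
  EuclideanSpace.single 0 (cos θ) + EuclideanSpace.single 1 (sin θ)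

section CircleDir

lemma circlePt_eq_add_smul_circleDir (x : ℝ²) (ε θ : ℝ) :
    circlePt x ε θ = x + ε • circleDir θ := rfl

lemma circleDir_eq_smul_single (θ : ℝ) :
    circleDir θ = cos θ • EuclideanSpace.single 0 1 + sin θ • EuclideanSpace.single 1 1 := by
  ext i; fin_cases i <;> simp [circleDir]

lemma inner_circleDir (α θ : ℝ) : ⟪circleDir α, circleDir θ⟫ = cos (θ - α) := by
  simp [circleDir, cos_sub, inner_add_left, inner_add_right, EuclideanSpace.inner_single_left]
  ring

lemma norm_circleDir (θ : ℝ) : ‖circleDir θ‖ = 1 := by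
  rw [norm_eq_sqrt_real_inner, inner_circleDir, sub_self, cos_zero, sqrt_one]

lemma circleDir_add (α φ : ℝ) :
    circleDir (α + φ) = cos φ • circleDir α + sin φ • circleDir (α + π / 2) := by
  ext i; fin_cases i <;> simp [circleDir, cos_add, sin_add] <;> ring

lemma circleDir_add_pi (α : ℝ) : circleDir (α + π) = -circleDir α := by
  ext i; fin_cases i <;> simp [circleDir]

lemma exists_eq_norm_smul_circleDir (v : ℝ²) : ∃ θ, v = ‖v‖ • circleDir θ := by
  set z : ℂ := ⟨v 0, v 1⟩
  have hz : ‖z‖ = ‖v‖ := by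
    rw [Complex.norm_def, Complex.normSq_apply, EuclideanSpace.norm_eq, Fin.sum_univ_two]
    simp [z, sq]
  refine ⟨Complex.arg z, ?_⟩
  ext i; fin_cases i
  · simpa [circleDir, hz] using (Complex.norm_mul_cos_arg z).symm
  · simpa [circleDir, hz] using (Complex.norm_mul_sin_arg z).symm

lemma bilin_circleDir_add_diag (T : ℝ² →L[ℝ] ℝ² →L[ℝ] ℝ) (α φ : ℝ) :
    T (circleDir (α + φ)) (circleDir (α + φ)) =
      cos φ ^ 2 * T (circleDir α) (circleDir α) +
        cos φ * sin φ * (T (circleDir α) (circleDir (α + π / 2)) +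
          T (circleDir (α + π / 2)) (circleDir α)) +
        sin φ ^ 2 * T (circleDir (α + π / 2)) (circleDir (α + π / 2)) := by
  rw [circleDir_add, bilin_smul_add_smul_diag]

end CircleDir

section GradientFrame

variable {u : ℝ² → ℝ} {x : ℝ²} {g α : ℝ}

lemma exists_gradient_eq_gradNorm_smul_circleDir (hD : fderiv ℝ u x ≠ 0) :
    0 < gradNorm u x ∧ ∃ α, gradient u x = gradNorm u x • circleDir α := by
  rw [gradNorm_eq_norm_gradient]
  refine ⟨norm_pos_iff.2 fun h => hD ?_, exists_eq_norm_smul_circleDir _⟩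
  rw [← toDual_gradient, h, map_zero]

lemma gradNorm_eq_of_gradient_eq (hg : 0 ≤ g) (hgrad : gradient u x = g • circleDir α) :
    gradNorm u x = g := by
  rw [gradNorm_eq_norm_gradient, hgrad, norm_smul, norm_circleDir, mul_one,
    Real.norm_of_nonneg hg]

lemma fderiv_apply_circleDir (hgrad : gradient u x = g • circleDir α) (θ : ℝ) :
    fderiv ℝ u x (circleDir θ) = g * cos (θ - α) := by
  rw [← inner_gradient_left, hgrad, real_inner_smul_left, inner_circleDir]

lemma ContDiffAt.lap_eq_circleDir (hu : ContDiffAt ℝ 2 u x) (α : ℝ) :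
    lap u x = fderiv ℝ (fderiv ℝ u) x (circleDir α) (circleDir α) +
      fderiv ℝ (fderiv ℝ u) x (circleDir (α + π / 2)) (circleDir (α + π / 2)) := by
  simp only [lap, Fin.sum_univ_two, hu.pd2_eq_fderiv_fderiv, circleDir_eq_smul_single,
    bilin_smul_add_smul_diag, cos_add_pi_div_two, sin_add_pi_div_two]
  linear_combination (-(fderiv ℝ (fderiv ℝ u) x (EuclideanSpace.single 0 1)
    (EuclideanSpace.single 0 1) + fderiv ℝ (fderiv ℝ u) x (EuclideanSpace.single 1 1)
    (EuclideanSpace.single 1 1))) * sin_sq_add_cos_sq α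

lemma ContDiffAt.infLap_eq_circleDir (hu : ContDiffAt ℝ 2 u x) (hg : 0 < g)
    (hgrad : gradient u x = g • circleDir α) :
    infLap u x = fderiv ℝ (fderiv ℝ u) x (circleDir α) (circleDir α) := by
  have h0 : pd u 0 x = g * Real.cos α := by simp [pd_eq_gradient_apply, hgrad, circleDir]
  have h1 : pd u 1 x = g * Real.sin α := by simp [pd_eq_gradient_apply, hgrad, circleDir]
  simp only [infLap, gradNorm_eq_of_gradient_eq hg.le hgrad, Fin.sum_univ_two, h0, h1,
    hu.pd2_eq_fderiv_fderiv, circleDir_eq_smul_single α, bilin_smul_add_smul_diag]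
  field_simp
  ring

theorem ContDiffAt.pLap_eq_circleDir (hu : ContDiffAt ℝ 2 u x) (hg : 0 < g)
    (hgrad : gradient u x = g • circleDir α) (p : ℝ) :
    pLap p u x = g ^ (p - 2) *
      (fderiv ℝ (fderiv ℝ u) x (circleDir (α + π / 2)) (circleDir (α + π / 2)) +
        (p - 1) * fderiv ℝ (fderiv ℝ u) x (circleDir α) (circleDir α)) := by
  have hG := gradNorm_eq_of_gradient_eq hg.le hgrad
  rw [hu.pLap_eq (hG ▸ hg.ne'), hu.lap_eq_circleDir α, hu.infLap_eq_circleDir hg hgrad, hG]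
  ring

end GradientFrame

lemma eventually_mul_le (L : ℝ) {M : ℝ} (hM : 0 < M) : ∀ᶠ ε in 𝓝[>] (0 : ℝ), ε * L ≤ M :=
  nhdsWithin_le_nhds <|
    ((continuous_id.mul continuous_const).tendsto' 0 0 (zero_mul L)).eventually (ge_mem_nhds hM)

lemma add_quadratic_le_of_sq_add_sq_le {g ε a b A K B c : ℝ} (hg : 0 < g) (hε : 0 < ε)
    (hab : a ^ 2 + b ^ 2 ≤ ε ^ 2) (hAB : ε * (|A| + |B|) ≤ g / 2) (hK : ε * K ^ 2 ≤ c * g) :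
    g * a + (a ^ 2 * A + a * b * K + b ^ 2 * B) / 2 ≤ g * ε + ε ^ 2 / 2 * A + c / 2 * ε ^ 2 := by
  have ha : |a| ≤ ε := abs_le_of_sq_le_sq' (by nlinarith [sq_nonneg b]) hε.le |> abs_le.2
  have hεa : 0 ≤ ε - a := by linarith [le_abs_self a]
  have hε2 : ε ^ 2 - a ^ 2 ≤ 2 * ε * (ε - a) := by nlinarith [neg_abs_le a]
  have hA : (a ^ 2 - ε ^ 2) * A ≤ 2 * ε * (ε - a) * |A| := by
    nlinarith [neg_abs_le A, abs_nonneg A, sq_nonneg b]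
  have hB : b ^ 2 * B ≤ 2 * ε * (ε - a) * |B| := by
    nlinarith [le_abs_self B, abs_nonneg B, sq_nonneg b]
  -- the cross term is absorbed by AM-GM: `4 ε² g |b K| ≤ g² b² + 4 K² ε⁴`
  have hK' : a * b * K ≤ g * (ε - a) / 2 + c * ε ^ 2 := by
    have hcross : a * b * K ≤ ε * (|b| * |K|) := by
      calc a * b * K ≤ |a| * |b| * |K| := by
            rw [← abs_mul, ← abs_mul]; exact le_abs_self _
        _ ≤ ε * (|b| * |K|) := by rw [mul_assoc]; gcongr
    have hamgm : 4 * ε * g * (ε * (|b| * |K|)) ≤ g ^ 2 * b ^ 2 + 4 * K ^ 2 * ε ^ 4 := by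
      rw [← sq_abs b, ← sq_abs K]
      nlinarith [sq_nonneg (g * |b| - 2 * |K| * ε ^ 2)]
    have hb2 : g ^ 2 * b ^ 2 ≤ g ^ 2 * (2 * ε * (ε - a)) := by gcongr; linarith
    have hK2 : 4 * K ^ 2 * ε ^ 4 ≤ 4 * ε ^ 3 * (c * g) := by
      nlinarith [pow_pos hε 3]
    have : 4 * ε * g * (a * b * K) ≤ 4 * ε * g * (g * (ε - a) / 2 + c * ε ^ 2) := by
      nlinarith [mul_le_mul_of_nonneg_left hcross (by positivity : (0 : ℝ) ≤ 4 * ε * g)]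
    exact le_of_mul_le_mul_left this (by positivity)
  nlinarith [mul_le_mul_of_nonneg_left hAB (by positivity : (0 : ℝ) ≤ 2 * (ε - a))]

section MaxMin

variable {u : ℝ² → ℝ} {x : ℝ²} {g α : ℝ}

lemma eventually_abs_sub_taylor_circleDir_le (hu : ContDiffAt ℝ 2 u x)
    (hgrad : gradient u x = g • circleDir α) {δ : ℝ} (hδ : 0 < δ) :
    ∀ᶠ ε in 𝓝[>] (0 : ℝ), ∀ ρ ∈ Icc 0 ε, ∀ θ,
      |u (x + ρ • circleDir θ) - (u x + g * ρ * cos (θ - α) +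
        ρ ^ 2 / 2 * fderiv ℝ (fderiv ℝ u) x (circleDir θ) (circleDir θ))| ≤ δ * ε ^ 2 := by
  filter_upwards [nhdsWithin_le_nhds
    (eventually_closedBall_subset (isLittleO_iff.1 hu.isLittleO_taylor_two hδ))]
    with ε hε ρ hρ θ
  have hnorm : ‖ρ • circleDir θ‖ = ρ := by
    rw [norm_smul, norm_circleDir, mul_one, Real.norm_of_nonneg hρ.1]
  have := hε (mem_closedBall_zero_iff.2 (hnorm.trans_le hρ.2))
  simp only [Set.mem_ofPred_eq, hnorm, norm_pow, Real.norm_eq_abs, map_smul,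
    smul_apply, smul_eq_mul, fderiv_apply_circleDir hgrad] at this
  calc _ = |u (x + ρ • circleDir θ) - u x - ρ * (g * cos (θ - α)) -
        ρ * (ρ * fderiv ℝ (fderiv ℝ u) x (circleDir θ) (circleDir θ)) / 2| := by ring_nf
    _ ≤ δ * |ρ| ^ 2 := this
    _ ≤ δ * ε ^ 2 := by rw [sq_abs]; gcongr; exacts [hρ.1, hρ.2]

lemma eventually_forall_closedBall_le (hu : ContDiffAt ℝ 2 u x) (hg : 0 < g)
    (hgrad : gradient u x = g • circleDir α) {c : ℝ} (hc : 0 < c) :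
    ∀ᶠ ε in 𝓝[>] (0 : ℝ), ∀ y ∈ closedBall x ε, u y ≤
      u x + g * ε + ε ^ 2 / 2 * fderiv ℝ (fderiv ℝ u) x (circleDir α) (circleDir α) +
        c * ε ^ 2 := by
  set H := fderiv ℝ (fderiv ℝ u) x
  set e := circleDir α
  set f := circleDir (α + π / 2)
  filter_upwards [eventually_abs_sub_taylor_circleDir_le hu hgrad (half_pos hc),
    eventually_mul_le (|H e e| + |H f f|) (half_pos hg),
    eventually_mul_le ((H e f + H f e) ^ 2) (mul_pos hc hg),
    self_mem_nhdsWithin] with ε hT hAB hK (hε : 0 < ε) y hy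
  obtain ⟨θ, hθ⟩ := exists_eq_norm_smul_circleDir (y - x)
  set ρ := ‖y - x‖
  have hTy := hT ρ ⟨norm_nonneg _, mem_closedBall_iff_norm.1 hy⟩ θ
  have hQ := bilin_circleDir_add_diag H α (θ - α)
  rw [add_sub_cancel] at hQ
  rw [← hθ, add_sub_cancel, hQ] at hTy
  have hab : (ρ * cos (θ - α)) ^ 2 + (ρ * sin (θ - α)) ^ 2 ≤ ε ^ 2 := by
    nlinarith [sin_sq_add_cos_sq (θ - α), norm_nonneg (y - x), mem_closedBall_iff_norm.1 hy]
  have := add_quadratic_le_of_sq_add_sq_le hg hε hab hAB hK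
  nlinarith [abs_le.1 hTy]

lemma eventually_le_apply_add_circleDir (hu : ContDiffAt ℝ 2 u x)
    (hgrad : gradient u x = g • circleDir α) {c : ℝ} (hc : 0 < c) :
    ∀ᶠ ε in 𝓝[>] (0 : ℝ), u x + g * ε +
      ε ^ 2 / 2 * fderiv ℝ (fderiv ℝ u) x (circleDir α) (circleDir α) - c * ε ^ 2 ≤
        u (x + ε • circleDir α) := by
  filter_upwards [eventually_abs_sub_taylor_circleDir_le hu hgrad hc, self_mem_nhdsWithin]
    with ε hT (hε : 0 < ε)
  have := abs_le.1 (hT ε ⟨hε.le, le_rfl⟩ α)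
  rw [sub_self, cos_zero, mul_one] at this
  linarith [this.1]

theorem isLittleO_sSup_image_closedBall (hu : ContDiffAt ℝ 2 u x) (hg : 0 < g)
    (hgrad : gradient u x = g • circleDir α) :
    (fun ε => sSup (u '' closedBall x ε) - (u x + g * ε +
      ε ^ 2 / 2 * fderiv ℝ (fderiv ℝ u) x (circleDir α) (circleDir α)))
      =o[𝓝[>] (0 : ℝ)] fun ε => ε ^ 2 := by
  refine isLittleO_iff.2 fun c hc => ?_
  filter_upwards [eventually_forall_closedBall_le hu hg hgrad hc,
    eventually_le_apply_add_circleDir hu hgrad hc, self_mem_nhdsWithin]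
    with ε hup hlow (hε : 0 < ε)
  have hmem : x + ε • circleDir α ∈ closedBall x ε := by
    rw [mem_closedBall_iff_norm, add_sub_cancel_left, norm_smul, norm_circleDir, mul_one,
      Real.norm_of_nonneg hε.le]
  have hle := csSup_le ⟨_, mem_image_of_mem u hmem⟩ (forall_mem_image.2 hup)
  have hge := hlow.trans (le_csSup ⟨_, forall_mem_image.2 hup⟩ (mem_image_of_mem u hmem))
  rw [Real.norm_eq_abs, norm_pow, Real.norm_eq_abs, sq_abs, abs_le]
  constructor <;> linarith

lemma sSup_image_neg (u : ℝ² → ℝ) (s : Set ℝ²) :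
    sSup ((fun y => -u y) '' s) = -sInf (u '' s) := by
  rw [Real.sInf_def, neg_neg, ← Set.image_neg_eq_neg, Set.image_image]

theorem isLittleO_sInf_image_closedBall (hu : ContDiffAt ℝ 2 u x) (hg : 0 < g)
    (hgrad : gradient u x = g • circleDir α) :
    (fun ε => sInf (u '' closedBall x ε) - (u x - g * ε +
      ε ^ 2 / 2 * fderiv ℝ (fderiv ℝ u) x (circleDir α) (circleDir α)))
      =o[𝓝[>] (0 : ℝ)] fun ε => ε ^ 2 := by
  have h := isLittleO_sSup_image_closedBall hu.neg hg (α := α + π)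
    (by rw [gradient_fun_neg, hgrad, circleDir_add_pi, smul_neg])
  simp only [fderiv_fderiv_fun_neg, circleDir_add_pi, sSup_image_neg, map_neg, neg_apply,
    neg_neg] at h
  refine h.neg_left.congr_left fun ε => ?_
  ring

end MaxMin

lemma volume_le_cos_sub_lt_pi (α : ℝ) {c : ℝ} (hc : 0 < c) :
    volume {θ ∈ Ico 0 (2 * π) | c ≤ cos (θ - α)} < ENNReal.ofReal π := by
  set P := {θ : ℝ | c ≤ cos (θ - α)}
  have hP : MeasurableSet P := measurableSet_le measurable_const (by fun_prop)
  have hper : ∀ k : AddSubgroup.zmultiples (2 * π), (fun θ => k +ᵥ θ) ⁻¹' P = P := by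
    rintro ⟨_, k, rfl⟩
    ext θ
    simp [P, show (k : ℝ) * (2 * π) + θ - α = (θ - α) + k * (2 * π) by ring]
  -- by `2π`-periodicity, measure the arc over the period centred at `α` instead
  have hshift := (isAddFundamentalDomain_Ioc two_pi_pos 0).measure_set_eq
    (isAddFundamentalDomain_Ioc two_pi_pos (α - π)) hP hper
  have harc : P ∩ Ioc (α - π) (α - π + 2 * π) ⊆ Icc (α - arccos c) (α + arccos c) := by
    rintro θ ⟨hθP, hθ1, hθ2⟩
    have habs : |θ - α| ≤ π := abs_le.2 ⟨by linarith, by linarith⟩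
    have : |θ - α| ≤ arccos c := by
      rw [← arccos_cos (abs_nonneg _) habs, cos_abs]
      exact arccos_le_arccos hθP
    constructor <;> linarith [abs_le.1 this]
  calc volume {θ ∈ Ico 0 (2 * π) | c ≤ cos (θ - α)} = volume (P ∩ Ioc 0 (0 + 2 * π)) := by
        rw [zero_add, inter_comm]
        exact measure_congr (Ico_ae_eq_Ioc.inter (ae_eq_refl P))
    _ ≤ volume (Icc (α - arccos c) (α + arccos c)) := hshift ▸ measure_mono harc
    _ < ENNReal.ofReal π := by
        rw [Real.volume_Icc, ENNReal.ofReal_lt_ofReal_iff pi_pos]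
        linarith [arccos_lt_pi_div_two.2 hc]

lemma IsCircleMedian.neg {u : ℝ² → ℝ} {x : ℝ²} {ε m : ℝ} (h : IsCircleMedian u x ε m) :
    IsCircleMedian (fun y => -u y) x ε (-m) := by
  simpa only [IsCircleMedian, neg_le_neg_iff] using h.symm

lemma IsCircleMedian.ofReal_pi_le_volume {u : ℝ² → ℝ} {x : ℝ²} {ε m : ℝ}
    (h : IsCircleMedian u x ε m) :
    ENNReal.ofReal π ≤ volume {θ ∈ Ico 0 (2 * π) | m ≤ u (circlePt x ε θ)} := by
  have hcover : Ico 0 (2 * π) ⊆ {θ ∈ Ico 0 (2 * π) | m ≤ u (circlePt x ε θ)} ∪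
      {θ ∈ Ico 0 (2 * π) | u (circlePt x ε θ) ≤ m} := fun θ hθ =>
    (le_total m (u (circlePt x ε θ))).imp (⟨hθ, ·⟩) (⟨hθ, ·⟩)
  have := (measure_mono (μ := volume) hcover).trans (measure_union_le _ _)
  rw [← h, Real.volume_Ico, sub_zero, ← two_mul, ENNReal.ofReal_mul zero_le_two,
    ENNReal.ofReal_ofNat] at this
  exact (ENNReal.mul_le_mul_iff_right two_ne_zero ENNReal.ofNat_ne_top).1 this

lemma mul_sq_le_of_le_add_quadratic {g ε a b A K B δ : ℝ} (hε : 0 < ε)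
    (hδ : 0 < δ) (hab : a ^ 2 + b ^ 2 = ε ^ 2) (hL : ε * (|A - B| + |K|) ≤ g)
    (h : ε ^ 2 * (B / 2 + δ) ≤ g * a + (a ^ 2 * A + a * b * K + b ^ 2 * B) / 2 + δ / 4 * ε ^ 2) :
    ε ^ 2 * δ ≤ 2 * g * a := by
  have ha : |a| ≤ ε := abs_le_of_sq_le_sq' (by nlinarith [sq_nonneg b]) hε.le |> abs_le.2
  have hb : |b| ≤ ε := abs_le_of_sq_le_sq' (by nlinarith [sq_nonneg a]) hε.le |> abs_le.2
  have hsplit : a ^ 2 * A + a * b * K + b ^ 2 * B = ε ^ 2 * B + a * (a * (A - B) + b * K) := by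
    linear_combination B * hab
  have hquad : a * (a * (A - B) + b * K) ≤ |a| * (ε * (|A - B| + |K|)) := by
    calc a * (a * (A - B) + b * K) ≤ |a| * (|a| * |A - B| + |b| * |K|) := by
          rw [← abs_mul, ← abs_mul]
          exact (le_abs_self _).trans (by rw [abs_mul]; gcongr; exact abs_add_le _ _)
      _ ≤ |a| * (ε * (|A - B| + |K|)) := by
          gcongr; nlinarith [abs_nonneg (A - B), abs_nonneg K]
  have hmain : 3 / 2 * δ * ε ^ 2 ≤ 2 * g * a + |a| * g := by
    nlinarith [mul_le_mul_of_nonneg_left hL (abs_nonneg a)]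
  rcases le_or_gt a 0 with ha0 | ha0
  · rw [abs_of_nonpos ha0] at hmain
    nlinarith [pow_pos hε 2]
  · rw [abs_of_pos ha0] at hmain
    nlinarith

section Median

variable {u : ℝ² → ℝ} {x : ℝ²} {g α : ℝ}

lemma eventually_volume_le_circlePt_lt_pi (hu : ContDiffAt ℝ 2 u x) (hg : 0 < g)
    (hgrad : gradient u x = g • circleDir α) {s : ℝ}
    (hs : fderiv ℝ (fderiv ℝ u) x (circleDir (α + π / 2)) (circleDir (α + π / 2)) / 2 < s) :
    ∀ᶠ ε in 𝓝[>] (0 : ℝ),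
      volume {θ ∈ Ico 0 (2 * π) | u x + ε ^ 2 * s ≤ u (circlePt x ε θ)} < ENNReal.ofReal π := by
  set H := fderiv ℝ (fderiv ℝ u) x
  set e := circleDir α
  set f := circleDir (α + π / 2)
  set δ := s - H f f / 2 with hδdef
  have hδ : 0 < δ := sub_pos.2 hs
  filter_upwards [eventually_abs_sub_taylor_circleDir_le hu hgrad (by positivity : 0 < δ / 4),
    eventually_mul_le (|H e e - H f f| + |H e f + H f e|) hg, self_mem_nhdsWithin]
    with ε hT hL (hε : 0 < ε)
  refine (measure_mono ?_).trans_lt (volume_le_cos_sub_lt_pi α (c := ε * δ / (2 * g))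
    (by positivity))
  rintro θ ⟨hθ, hle⟩
  refine ⟨hθ, ?_⟩
  have hTθ := hT ε ⟨hε.le, le_rfl⟩ θ
  have hQ := bilin_circleDir_add_diag H α (θ - α)
  rw [add_sub_cancel] at hQ
  rw [← circlePt_eq_add_smul_circleDir, hQ] at hTθ
  have hab : (ε * cos (θ - α)) ^ 2 + (ε * sin (θ - α)) ^ 2 = ε ^ 2 := by
    linear_combination ε ^ 2 * cos_sq_add_sin_sq (θ - α)
  have := mul_sq_le_of_le_add_quadratic hε hδ hab hL (by nlinarith [abs_le.1 hTθ, hδdef])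
  rw [div_le_iff₀ (by positivity)]
  nlinarith

lemma eventually_lt_of_isCircleMedian (hu : ContDiffAt ℝ 2 u x) (hg : 0 < g)
    (hgrad : gradient u x = g • circleDir α) {m : ℝ → ℝ}
    (hm : ∀ᶠ ε in 𝓝[>] (0 : ℝ), IsCircleMedian u x ε (m ε)) {s : ℝ}
    (hs : fderiv ℝ (fderiv ℝ u) x (circleDir (α + π / 2)) (circleDir (α + π / 2)) / 2 < s) :
    ∀ᶠ ε in 𝓝[>] (0 : ℝ), m ε < u x + ε ^ 2 * s := by
  filter_upwards [hm, eventually_volume_le_circlePt_lt_pi hu hg hgrad hs] with ε hmed hvol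
  by_contra! hle
  refine hvol.not_ge (hmed.ofReal_pi_le_volume.trans (measure_mono ?_))
  exact fun θ ⟨hθ, hθm⟩ => ⟨hθ, hle.trans hθm⟩

theorem isLittleO_median (hu : ContDiffAt ℝ 2 u x) (hg : 0 < g)
    (hgrad : gradient u x = g • circleDir α) {m : ℝ → ℝ}
    (hm : ∀ᶠ ε in 𝓝[>] (0 : ℝ), IsCircleMedian u x ε (m ε)) :
    (fun ε => m ε - (u x + ε ^ 2 / 2 *
      fderiv ℝ (fderiv ℝ u) x (circleDir (α + π / 2)) (circleDir (α + π / 2))))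
      =o[𝓝[>] (0 : ℝ)] fun ε => ε ^ 2 := by
  set B := fderiv ℝ (fderiv ℝ u) x (circleDir (α + π / 2)) (circleDir (α + π / 2))
  have hgrad' : gradient (fun y => -u y) x = g • circleDir (α + π) := by
    rw [gradient_fun_neg, hgrad, circleDir_add_pi, smul_neg]
  have hB' : fderiv ℝ (fderiv ℝ fun y => -u y) x (circleDir (α + π + π / 2))
      (circleDir (α + π + π / 2)) = -B := by
    rw [show α + π + π / 2 = α + π / 2 + π by ring, circleDir_add_pi, fderiv_fderiv_fun_neg]
    simp only [neg_apply, map_neg, neg_neg, B]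
  refine isLittleO_iff.2 fun c hc => ?_
  filter_upwards [eventually_lt_of_isCircleMedian hu hg hgrad hm (s := B / 2 + c) (by linarith),
    eventually_lt_of_isCircleMedian hu.neg hg hgrad' (hm.mono fun _ h => h.neg)
      (s := -B / 2 + c) (by rw [hB']; linarith)] with ε hup hlow
  rw [Real.norm_eq_abs, norm_pow, Real.norm_eq_abs, sq_abs, abs_le]
  constructor <;> nlinarith

end Median

lemma isLittleO_sq_iff_of_sub_mul_sq {f : ℝ → ℝ} {C : ℝ}
    (hf : (fun ε => f ε - C * ε ^ 2) =o[𝓝[>] (0 : ℝ)] fun ε => ε ^ 2) :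
    f =o[𝓝[>] (0 : ℝ)] (fun ε => ε ^ 2) ↔ C = 0 := by
  refine ⟨fun h => ?_, fun hC => by simpa [hC] using hf⟩
  have hC : (fun ε : ℝ => C * ε ^ 2) =o[𝓝[>] (0 : ℝ)] fun ε => ε ^ 2 := by
    simpa using h.sub hf
  by_contra hC0
  refine isLittleO_irrefl ?_ ((isLittleO_const_mul_left_iff hC0).1 hC)
  refine Eventually.frequently ?_
  filter_upwards [self_mem_nhdsWithin] with ε (hε : 0 < ε)
  exact pow_ne_zero 2 hε.ne'

/-- median/max-min asymptotic characterization of Δ_p u(x) = 0. -/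
theorem pLap_zero_iff_median_maxmin (Ω : Set (EuclideanSpace ℝ (Fin 2))) (hΩ : IsOpen Ω)
    (u : EuclideanSpace ℝ (Fin 2) → ℝ) (hu : ContDiffOn ℝ 2 u Ω)
    (x : EuclideanSpace ℝ (Fin 2)) (hx : x ∈ Ω) (hD : fderiv ℝ u x ≠ 0)
    (p : ℝ) (hp : 1 < p) (m : ℝ → ℝ)
    (hm : ∀ᶠ ε in 𝓝[>] (0:ℝ), IsCircleMedian u x ε (m ε)) :
    pLap p u x = 0 ↔
      (fun ε : ℝ => u x - ((1 / p) * m ε + ((p - 1) / (2 * p)) *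
          (sSup (u '' Metric.closedBall x ε) + sInf (u '' Metric.closedBall x ε))))
        =o[𝓝[>] (0:ℝ)] fun ε => ε ^ 2 := by
  have hxu : ContDiffAt ℝ 2 u x := hu.contDiffAt (hΩ.mem_nhds hx)
  obtain ⟨hg, α, hgrad⟩ := exists_gradient_eq_gradNorm_smul_circleDir hD
  have hp0 : p ≠ 0 := by positivity
  have hexp := ((isLittleO_median hxu hg hgrad hm).const_mul_left (-(1 / p))).add
    (((isLittleO_sSup_image_closedBall hxu hg hgrad).add
      (isLittleO_sInf_image_closedBall hxu hg hgrad)).const_mul_left (-((p - 1) / (2 * p))))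
  set A := fderiv ℝ (fderiv ℝ u) x (circleDir α) (circleDir α)
  set B := fderiv ℝ (fderiv ℝ u) x (circleDir (α + π / 2)) (circleDir (α + π / 2))
  rw [hxu.pLap_eq_circleDir hg hgrad, isLittleO_sq_iff_of_sub_mul_sq
    (C := -(B + (p - 1) * A) / (2 * p)) (hexp.congr_left fun ε => by field_simp; ring), mul_eq_zero,
    or_iff_right (rpow_pos_of_pos hg _).ne', neg_div, neg_eq_zero, div_eq_zero_iff,
    or_iff_left (by positivity)]
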